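/- The TED activation function λ(α) = e^α/(e^α − 1) − 1/α, extended by λ(0) = 1/2, takes values strictly in the open interval (0,1) for all real α. -/

import Mathlib

/-!
For `α ≠ 0` write `λ(α) = N / D` with `D = α (e^α - 1)` and `N = 1 - (1 - α) e^α`. The
denominator is positive because `e^α - 1` has the sign of `α`, and `D - N = e^α - (1 + α)`.
So `0 < N < D` amounts to the strict inequality `1 + x < e^x` at `x = -α` and at `x = α`.
-/

open Real

noncomputable def tedActivation (α : ℝ) : ℝ :=
  if α = 0 then 1 / 2 else Real.exp α / (Real.exp α - 1) - 1 / α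

lemma mul_exp_sub_one_pos {α : ℝ} (hα : α ≠ 0) : 0 < α * (exp α - 1) := by
  rcases hα.lt_or_gt with hneg | hpos
  · exact mul_pos_of_neg_of_neg hneg (sub_neg.2 (exp_lt_one_iff.2 hneg))
  · exact mul_pos hpos (sub_pos.2 (one_lt_exp_iff.2 hpos))

lemma one_sub_mul_exp_lt_one {α : ℝ} (hα : α ≠ 0) : (1 - α) * exp α < 1 := by
  have h := mul_lt_mul_of_pos_right (add_one_lt_exp (neg_ne_zero.2 hα)) (exp_pos α)
  rwa [← exp_add, neg_add_cancel, exp_zero, neg_add_eq_sub] at h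

lemma tedActivation_eq_div {α : ℝ} (hα : α ≠ 0) :
    tedActivation α = (1 - (1 - α) * exp α) / (α * (exp α - 1)) := by
  have hexp : exp α - 1 ≠ 0 := right_ne_zero_of_mul (mul_exp_sub_one_pos hα).ne'
  rw [tedActivation, if_neg hα]
  field_simp
  ring

theorem ted_activation_mem_Ioo (α : ℝ) :
    tedActivation α ∈ Set.Ioo (0 : ℝ) 1 := by
  by_cases hα : α = 0
  · simp only [tedActivation, if_pos hα]
    norm_num
  have hD := mul_exp_sub_one_pos hα
  rw [tedActivation_eq_div hα]
  refine ⟨div_pos (sub_pos.2 (one_sub_mul_exp_lt_one hα)) hD, (div_lt_one hD).2 ?_⟩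
  linarith [add_one_lt_exp hα]
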